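/- arXiv:2410.03656 — 2 statements merged into one kernel-verified Lean document; each statement's English description precedes it below -/
import Mathlib

section
/- For t ≥ 3, every resolving set S of M_t with |S ∩ V_2| ≤ t − 2 satisfies |S| ≥ 3·2^{t−2}. -/
open SimpleGraph Function
open scoped Classical

/-- A set `S` is a resolving set of `G`: every pair of distinct vertices differ in
distance to some element of `S`. -/
def IsResolving {V : Type*} (G : SimpleGraph V) (S : Set V) : Prop :=
  ∀ x y : V, x ≠ y → ∃ s ∈ S, G.dist s x ≠ G.dist s y

/-- A fault-tolerant resolving set: removing any single vertex leaves a resolving set. -/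
def IsFTResolving {V : Type*} (G : SimpleGraph V) (S : Set V) : Prop :=
  ∀ s ∈ S, IsResolving G (S \ {s})

/-- The metric dimension of `G`. -/
noncomputable def metricDim {V : Type*} [Fintype V] (G : SimpleGraph V) : ℕ :=
  sInf {n | ∃ S : Finset V, IsResolving G ↑S ∧ S.card = n}

/-- The fault-tolerant metric dimension of `G`. -/
noncomputable def ftDim {V : Type*} [Fintype V] (G : SimpleGraph V) : ℕ :=
  sInf {n | ∃ S : Finset V, IsFTResolving G ↑S ∧ S.card = n}

/-- `S` is a `k`-resolving set: every pair of distinct vertices is distinguished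
by at least `k` vertices of `S`. -/
def IsKResolving {V : Type*} [Fintype V] (G : SimpleGraph V) (k : ℕ) (S : Finset V) : Prop :=
  ∀ x y : V, x ≠ y → k ≤ (S.filter (fun s => G.dist s x ≠ G.dist s y)).card

/-- The `k`-metric dimension of `G`. -/
noncomputable def kMetricDim {V : Type*} [Fintype V] (G : SimpleGraph V) (k : ℕ) : ℕ :=
  sInf {n | ∃ S : Finset V, IsKResolving G k S ∧ S.card = n}

/-- The graph `M_t`: a clique on all binary strings of length `t`, together with
independent vertices `v_1, …, v_t`, where `v_i` is adjacent to exactly those strings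
having `1` (`true`) at coordinate `i`. -/
def Mt (t : ℕ) : SimpleGraph ((Fin t → Bool) ⊕ Fin t) where
  Adj x y :=
    match x, y with
    | Sum.inl u, Sum.inl v => u ≠ v
    | Sum.inl u, Sum.inr i => u i = true
    | Sum.inr i, Sum.inl u => u i = true
    | Sum.inr _, Sum.inr _ => False
  symm := by
    constructor
    rintro (u | i) (v | j) h
    · exact h.symm
    · exact h
    · exact h
    · exact h
  loopless := by
    constructor
    rintro (u | i) h
    · exact h rfl
    · exact h

/-!
Two strings outside `S` are at distance 1 from every other string, so only a vertex `v_k ∈ S`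
can tell them apart, and `v_k` sees nothing but their `k`-th coordinates. Hence restricting the
strings outside `S` to the coordinates `k` with `v_k ∈ S` is injective: at most
`2 ^ (t - 2)` strings are missing from `S`, and `S` contains the other `2 ^ t - 2 ^ (t - 2)`.
-/

open Finset

lemma Finset.card_filter_isRight {α β : Type*} (u : Finset (α ⊕ β)) :
    #(u.filter fun x => x.isRight) = #u.toRight := by
  have : u.filter (fun x => x.isRight) = u.toRight.map .inr := by ext (a | b) <;> simp
  rw [this, card_map]

namespace Mt

variable {t : ℕ}

lemma dist_inl_inl {u v : Fin t → Bool} (h : u ≠ v) : (Mt t).dist (.inl u) (.inl v) = 1 :=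
  dist_eq_one_iff_adj.2 h

lemma dist_inr_inl (k : Fin t) (u : Fin t → Bool) :
    (Mt t).dist (.inr k) (.inl u) = if u k then 1 else 2 := by
  split_ifs with hu
  · exact dist_eq_one_iff_adj.2 hu
  · have hk : (Mt t).Adj (.inr k) (.inl (update u k true)) := by simp [Mt]
    have hu' : (Mt t).Adj (.inl (update u k true)) (.inl u) := by
      simpa [Mt, funext_iff] using ⟨k, by simpa using hu⟩
    have hle : (Mt t).dist (.inr k) (.inl u) ≤ 2 := by
      simpa using dist_le (hk.toWalk.append hu'.toWalk)
    have hne0 : (Mt t).dist (.inr k) (.inl u) ≠ 0 :=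
      dist_ne_zero_iff_ne_and_reachable.2 ⟨Sum.inr_ne_inl, ⟨hk.toWalk.append hu'.toWalk⟩⟩
    have hne1 : (Mt t).dist (.inr k) (.inl u) ≠ 1 := fun h =>
      hu (dist_eq_one_iff_adj.1 h)
    omega

lemma dist_inr_inl_eq_iff {k : Fin t} {u v : Fin t → Bool} :
    (Mt t).dist (.inr k) (.inl u) = (Mt t).dist (.inr k) (.inl v) ↔ u k = v k := by
  rw [dist_inr_inl, dist_inr_inl]
  cases u k <;> cases v k <;> simp

lemma eq_of_agree_on_toRight {S : Finset ((Fin t → Bool) ⊕ Fin t)} (hS : IsResolving (Mt t) ↑S)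
    {u v : Fin t → Bool} (hu : u ∉ S.toLeft) (hv : v ∉ S.toLeft)
    (huv : ∀ k ∈ S.toRight, u k = v k) : u = v := by
  by_contra hne
  obtain ⟨s, hs, hdist⟩ := hS (.inl u) (.inl v) (by simpa using hne)
  rcases s with w | k
  · have hwu : w ≠ u := by rintro rfl; exact hu (mem_toLeft.2 hs)
    have hwv : w ≠ v := by rintro rfl; exact hv (mem_toLeft.2 hs)
    exact hdist (by rw [dist_inl_inl hwu, dist_inl_inl hwv])
  · exact hdist (dist_inr_inl_eq_iff.2 (huv k (mem_toRight.2 hs)))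

lemma card_compl_toLeft_le {S : Finset ((Fin t → Bool) ⊕ Fin t)} (hS : IsResolving (Mt t) ↑S) :
    #S.toLeftᶜ ≤ 2 ^ #S.toRight := by
  have hinj : Set.InjOn (fun (u : Fin t → Bool) (k : S.toRight) => u k) ↑S.toLeftᶜ :=
    fun u hu v hv huv => eq_of_agree_on_toRight hS (mem_compl.1 hu) (mem_compl.1 hv) fun k hk => congrFun huv ⟨k, hk⟩
  calc #S.toLeftᶜ ≤ #(univ : Finset (S.toRight → Bool)) :=
        card_le_card_of_injOn _ (fun _ _ => mem_coe.2 (mem_univ _)) hinj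
    _ = 2 ^ #S.toRight := by rw [card_univ, Fintype.card_fun, Fintype.card_bool, Fintype.card_coe]

end Mt

theorem stmt9 (t : ℕ) (ht : 3 ≤ t) (S : Finset ((Fin t → Bool) ⊕ Fin t))
    (hS : IsResolving (Mt t) ↑S)
    (hV2 : (S.filter (fun x => x.isRight = true)).card ≤ t - 2) :
    3 * 2 ^ (t - 2) ≤ S.card := by
  have hcompl : #S.toLeftᶜ ≤ 2 ^ (t - 2) :=
    (Mt.card_compl_toLeft_le hS).trans
      (Nat.pow_le_pow_right two_pos (by simpa [card_filter_isRight] using hV2))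
  have hsplit : #S.toLeft + #S.toLeftᶜ = 2 ^ (t - 2) * 4 := by
    rw [card_add_card_compl, Fintype.card_fun, Fintype.card_bool, Fintype.card_fin,
      ← pow_sub_mul_pow 2 (by omega : 2 ≤ t)]
    rfl
  have hleft : #S.toLeft ≤ #S := card_toLeft_le
  omega
end

section
/- For every k ≥ 2 and every sufficiently large t, dim_{k+1}(M_{t,k}) ≥ 2^{t−1}; hence there exist graphs in which the (k+1)-metric dimension is exponential in the k-metric dimension. -/
open SimpleGraph Function
open scoped Classical

/-- The graph `M_{t,k}`: a clique on all binary strings of length `t`, together with the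
vertices `v_{i,j}` of `K_t □ K_k` (adjacent iff they agree in exactly one coordinate),
where `v_{i,j}` is adjacent to exactly those strings having `1` at coordinate `i`. -/
def Mtk (t k : ℕ) : SimpleGraph ((Fin t → Bool) ⊕ (Fin t × Fin k)) where
  Adj x y :=
    match x, y with
    | Sum.inl u, Sum.inl v => u ≠ v
    | Sum.inl u, Sum.inr p => u p.1 = true
    | Sum.inr p, Sum.inl u => u p.1 = true
    | Sum.inr p, Sum.inr q => (p.1 = q.1 ∧ p.2 ≠ q.2) ∨ (p.1 ≠ q.1 ∧ p.2 = q.2)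
  symm := by
    refine ⟨?_⟩
    rintro (u | p) (v | q) h
    · exact h.symm
    · exact h
    · exact h
    · rcases h with ⟨h1, h2⟩ | ⟨h1, h2⟩
      · exact Or.inl ⟨h1.symm, h2.symm⟩
      · exact Or.inr ⟨h1.symm, h2.symm⟩
  loopless := by
    refine ⟨?_⟩
    rintro (u | p) h
    · exact h rfl
    · rcases h with ⟨_, h2⟩ | ⟨h1, _⟩
      · exact h2 rfl
      · exact h1 rfl

/-!
Two strings that differ only at coordinate `i` are told apart by no vertex except themselves and
the `k` vertices `v_{i,j}`, so a `(k+1)`-resolving set contains one of them. Pairing each string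
with its flip at a fixed coordinate therefore forces at least `2^{t-1}` strings into the set.
The whole vertex set is `(k+1)`-resolving as soon as `t > k`, which keeps `kMetricDim` away from
its junk value `sInf ∅ = 0`.
-/

open Finset

lemma SimpleGraph.dist_eq_two_of_adj_of_adj {V : Type*} {G : SimpleGraph V} {a b c : V}
    (hne : a ≠ b) (hab : ¬ G.Adj a b) (hac : G.Adj a c) (hcb : G.Adj c b) : G.dist a b = 2 := by
  rw [SimpleGraph.dist,
    G.edist_eq_two_iff.mpr ⟨hne, hab, c, G.mem_commonNeighbors.mpr ⟨hac, hcb.symm⟩⟩]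
  rfl

theorem Finset.two_mul_card_filter_of_involutive {α : Type*} [Fintype α] {f : α → α}
    (hf : Involutive f) {p : α → Prop} [DecidablePred p] (hp : ∀ a, p (f a) ↔ ¬ p a) :
    2 * #(univ.filter p) = Fintype.card α := by
  have hswap : #(univ.filter p) = #(univ.filter fun a => ¬ p a) :=
    card_nbij' f f (fun _ _ => by simp_all) (fun _ _ => by simp_all) (fun a _ => hf a)
      (fun a _ => hf a)
  rw [← card_univ, ← card_filter_add_card_filter_not (s := univ) p, ← hswap, two_mul]

def flipAt {ι : Type*} [DecidableEq ι] (i : ι) (z : ι → Bool) : ι → Bool :=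
  update z i (!z i)

section flipAt
variable {ι : Type*} [DecidableEq ι]

@[simp] lemma flipAt_apply_self (i : ι) (z : ι → Bool) : flipAt i z i = !z i := by
  simp [flipAt]

lemma flipAt_apply_of_ne {i j : ι} (h : j ≠ i) (z : ι → Bool) : flipAt i z j = z j :=
  update_of_ne h _ _

lemma flipAt_involutive (i : ι) : Involutive (flipAt i) := fun z => by
  funext j
  by_cases h : j = i
  · subst h; simp
  · simp [flipAt_apply_of_ne h]

lemma flipAt_ne_self (i : ι) (z : ι → Bool) : flipAt i z ≠ z := fun h => by
  simpa using congrFun h i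

variable [Fintype ι]

lemma two_mul_card_filter_eq_two_pow {p : (ι → Bool) → Prop} [DecidablePred p] (i : ι)
    (hp : ∀ z, p (flipAt i z) ↔ ¬ p z) :
    2 * #(univ.filter p) = 2 ^ Fintype.card ι := by
  rw [two_mul_card_filter_of_involutive (flipAt_involutive i) hp, Fintype.card_fun,
    Fintype.card_bool]

lemma two_mul_card_filter_apply_eq_false (i : ι) :
    2 * #(univ.filter fun z : ι → Bool => z i = false) = 2 ^ Fintype.card ι :=
  two_mul_card_filter_eq_two_pow i fun z => by simp

lemma two_mul_card_filter_apply_ne_apply {i j : ι} (h : i ≠ j) :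
    2 * #(univ.filter fun z : ι → Bool => z i ≠ z j) = 2 ^ Fintype.card ι :=
  two_mul_card_filter_eq_two_pow i fun z => by
    rw [flipAt_apply_self, flipAt_apply_of_ne h.symm]
    cases z i <;> cases z j <;> simp

end flipAt

lemma Nat.le_of_two_mul_eq_two_pow {c t : ℕ} (h : 2 * c = 2 ^ t) : t ≤ c := by
  cases t with
  | zero => exact c.zero_le
  | succ t => rw [pow_succ', Nat.mul_left_cancel_iff two_pos] at h; exact h ▸ t.lt_two_pow_self

lemma le_kMetricDim {V : Type*} [Fintype V] {G : SimpleGraph V} {m n : ℕ}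
    (hne : ∃ S, IsKResolving G m S) (h : ∀ S, IsKResolving G m S → n ≤ #S) :
    n ≤ kMetricDim G m := by
  obtain ⟨S, hS⟩ := hne
  exact le_csInf ⟨_, S, hS, rfl⟩ fun _ ⟨S, hS, hn⟩ => hn ▸ h S hS

namespace Mtk
variable {t k : ℕ}

lemma dist_inl_inl {u v : Fin t → Bool} (h : u ≠ v) :
    (Mtk t k).dist (.inl u) (.inl v) = 1 :=
  dist_eq_one_iff_adj.mpr h

lemma dist_inr_inl (p : Fin t × Fin k) (u : Fin t → Bool) :
    (Mtk t k).dist (.inr p) (.inl u) = if u p.1 = true then 1 else 2 := by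
  split_ifs with h
  · exact dist_eq_one_iff_adj.mpr h
  · refine dist_eq_two_of_adj_of_adj (c := .inl (flipAt p.1 u)) (by simp) h ?_ ?_
    · change flipAt p.1 u p.1 = true
      simpa using h
    · exact flipAt_ne_self p.1 u

lemma dist_inl_inr (u : Fin t → Bool) (p : Fin t × Fin k) :
    (Mtk t k).dist (.inl u) (.inr p) = if u p.1 = true then 1 else 2 := by
  rw [dist_comm, dist_inr_inl]

lemma dist_inr_inr_of_adj {p q : Fin t × Fin k}
    (h : (p.1 = q.1 ∧ p.2 ≠ q.2) ∨ (p.1 ≠ q.1 ∧ p.2 = q.2)) :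
    (Mtk t k).dist (.inr p) (.inr q) = 1 :=
  dist_eq_one_iff_adj.mpr h

lemma dist_inr_inr_of_ne_of_ne {p q : Fin t × Fin k} (h₁ : p.1 ≠ q.1) (h₂ : p.2 ≠ q.2) :
    (Mtk t k).dist (.inr p) (.inr q) = 2 :=
  dist_eq_two_of_adj_of_adj (c := .inl fun _ => true) (by simp [Prod.ext_iff, h₁])
    (by rintro (⟨h, -⟩ | ⟨-, h⟩) <;> contradiction) rfl rfl

lemma card_filter_dist_ne_inl_inl {u w : Fin t → Bool} (h : u ≠ w) :
    k + 1 ≤ #(univ.filter fun s => (Mtk t k).dist s (.inl u) ≠ (Mtk t k).dist s (.inl w)) := by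
  obtain ⟨i, hi⟩ := Function.ne_iff.mp h
  let D := univ.image fun j : Fin k => (.inr (i, j) : (Fin t → Bool) ⊕ (Fin t × Fin k))
  calc k + 1 = #(insert (.inl u) D) := by
        rw [card_insert_of_notMem (by simp [D]),
          card_image_of_injective _ fun _ _ h => by simpa using h]
        simp
    _ ≤ _ := card_le_card fun s hs => mem_filter.mpr ⟨mem_univ s, by
        rcases mem_insert.mp hs with rfl | hs
        · rw [SimpleGraph.dist_self, dist_inl_inl h]; exact zero_ne_one
        · obtain ⟨j, -, rfl⟩ := mem_image.mp hs
          rw [dist_inr_inl, dist_inr_inl]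
          cases hu : u i <;> cases hw : w i <;> simp_all⟩

lemma card_filter_dist_ne_inl_inr (hkt : k < t) (u : Fin t → Bool) (p : Fin t × Fin k) :
    k + 1 ≤ #(univ.filter fun s => (Mtk t k).dist s (.inl u) ≠ (Mtk t k).dist s (.inr p)) := by
  let Z := univ.filter fun z : Fin t → Bool => z p.1 = false
  calc k + 1 ≤ #Z := hkt.trans_le (Nat.le_of_two_mul_eq_two_pow
          (by simpa using two_mul_card_filter_apply_eq_false p.1))
    _ = #(Z.image Sum.inl) := (card_image_of_injective _ Sum.inl_injective).symm
    _ ≤ _ := card_le_card fun s hs => mem_filter.mpr ⟨mem_univ s, by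
        obtain ⟨z, hz, rfl⟩ := mem_image.mp hs
        have hz : z p.1 = false := (mem_filter.mp hz).2
        rw [dist_inl_inr, hz]
        by_cases hzu : z = u
        · rw [hzu, SimpleGraph.dist_self]; simp
        · rw [dist_inl_inl hzu]; simp⟩

lemma card_filter_dist_ne_inr_inr_of_fst_ne {p q : Fin t × Fin k} (hkt : k < t)
    (h : p.1 ≠ q.1) :
    k + 1 ≤ #(univ.filter fun s => (Mtk t k).dist s (.inr p) ≠ (Mtk t k).dist s (.inr q)) := by
  let Z := univ.filter fun z : Fin t → Bool => z p.1 ≠ z q.1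
  calc k + 1 ≤ #Z := hkt.trans_le (Nat.le_of_two_mul_eq_two_pow
          (by simpa using two_mul_card_filter_apply_ne_apply h))
    _ = #(Z.image Sum.inl) := (card_image_of_injective _ Sum.inl_injective).symm
    _ ≤ _ := card_le_card fun s hs => mem_filter.mpr ⟨mem_univ s, by
        obtain ⟨z, hz, rfl⟩ := mem_image.mp hs
        have hz : z p.1 ≠ z q.1 := (mem_filter.mp hz).2
        rw [dist_inl_inr, dist_inl_inr]
        cases hp : z p.1 <;> cases hq : z q.1 <;> simp_all⟩

lemma card_filter_dist_ne_inr_inr_of_fst_eq {p q : Fin t × Fin k} (hkt : k < t)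
    (h₁ : p.1 = q.1) (h₂ : p.2 ≠ q.2) :
    k + 1 ≤ #(univ.filter fun s => (Mtk t k).dist s (.inr p) ≠ (Mtk t k).dist s (.inr q)) := by
  let D := univ.image fun a : Fin t => (.inr (a, p.2) : (Fin t → Bool) ⊕ (Fin t × Fin k))
  calc k + 1 ≤ #D := by
        rw [card_image_of_injective _ fun _ _ h => by simpa using h]
        simpa using hkt
    _ ≤ _ := card_le_card fun s hs => mem_filter.mpr ⟨mem_univ s, by
        obtain ⟨a, -, rfl⟩ := mem_image.mp hs
        by_cases ha : a = p.1
        · rw [ha, SimpleGraph.dist_self, dist_inr_inr_of_adj (.inl ⟨h₁, h₂⟩)]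
          exact zero_ne_one
        · rw [dist_inr_inr_of_adj (p := (a, p.2)) (.inr ⟨ha, rfl⟩),
            dist_inr_inr_of_ne_of_ne (p := (a, p.2)) (by rwa [← h₁]) h₂]
          decide⟩

lemma isKResolving_univ (hkt : k < t) : IsKResolving (Mtk t k) (k + 1) univ := by
  rintro (u | p) (w | q) hxy
  · exact card_filter_dist_ne_inl_inl (by simpa using hxy)
  · exact card_filter_dist_ne_inl_inr hkt u q
  · simpa only [ne_comm] using card_filter_dist_ne_inl_inr hkt w p
  · by_cases h₁ : p.1 = q.1
    · exact card_filter_dist_ne_inr_inr_of_fst_eq hkt h₁ fun h₂ => by simp_all [Prod.ext_iff]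
    · exact card_filter_dist_ne_inr_inr_of_fst_ne hkt h₁

lemma eq_or_eq_or_apply_ne_of_dist_ne {u w : Fin t → Bool}
    {s : (Fin t → Bool) ⊕ (Fin t × Fin k)}
    (h : (Mtk t k).dist s (.inl u) ≠ (Mtk t k).dist s (.inl w)) :
    s = .inl u ∨ s = .inl w ∨ ∃ p, s = .inr p ∧ u p.1 ≠ w p.1 := by
  rcases s with x | p
  · by_contra! hx
    exact h (by rw [dist_inl_inl (by simpa using hx.1), dist_inl_inl (by simpa using hx.2.1)])
  · refine .inr (.inr ⟨p, rfl, fun hp => h ?_⟩)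
    rw [dist_inr_inl, dist_inr_inl, hp]

lemma inl_mem_or_inl_flipAt_mem {S : Finset ((Fin t → Bool) ⊕ (Fin t × Fin k))}
    (hS : IsKResolving (Mtk t k) (k + 1) S) (i : Fin t) (u : Fin t → Bool) :
    .inl u ∈ S ∨ .inl (flipAt i u) ∈ S := by
  by_contra! hu
  have hsub :
      S.filter (fun s => (Mtk t k).dist s (.inl u) ≠ (Mtk t k).dist s (.inl (flipAt i u))) ⊆
        univ.image fun j => .inr (i, j) := by
    intro s hs
    obtain ⟨hsS, hs⟩ := mem_filter.mp hs
    rcases eq_or_eq_or_apply_ne_of_dist_ne hs with rfl | rfl | ⟨p, rfl, hp⟩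
    · exact absurd hsS hu.1
    · exact absurd hsS hu.2
    · have hpi : p.1 = i := by_contra fun hpi => hp (flipAt_apply_of_ne hpi u).symm
      exact mem_image.mpr ⟨p.2, mem_univ _, by rw [← hpi]⟩
  have := (hS _ _ (by simpa using (flipAt_ne_self i u).symm)).trans
    ((card_le_card hsub).trans card_image_le)
  simp at this

lemma two_pow_le_two_mul_card_toLeft {S : Finset ((Fin t → Bool) ⊕ (Fin t × Fin k))}
    (hS : IsKResolving (Mtk t k) (k + 1) S) (ht : 0 < t) :
    2 ^ t ≤ 2 * #S.toLeft := by
  let i : Fin t := ⟨0, ht⟩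
  have hcover : univ ⊆ S.toLeft ∪ S.toLeft.image (flipAt i) := fun u _ => by
    rcases inl_mem_or_inl_flipAt_mem hS i u with hu | hu
    · exact mem_union_left _ (mem_toLeft.mpr hu)
    · exact mem_union_right _ (mem_image.mpr ⟨_, mem_toLeft.mpr hu, flipAt_involutive i u⟩)
  calc 2 ^ t = #(univ : Finset (Fin t → Bool)) := by simp
    _ ≤ #S.toLeft + #(S.toLeft.image (flipAt i)) :=
      (card_le_card hcover).trans (card_union_le _ _)
    _ ≤ 2 * #S.toLeft := by rw [two_mul]; exact Nat.add_le_add_left card_image_le _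

end Mtk

theorem stmt19_general (t k : ℕ) (ht : k + 3 < t) :
    2 ^ (t - 1) ≤ kMetricDim (Mtk t k) (k + 1) := by
  refine le_kMetricDim ⟨_, Mtk.isKResolving_univ (by omega)⟩ fun S hS => ?_
  have hhalf : 2 ^ t = 2 * 2 ^ (t - 1) := by rw [← pow_succ']; congr 1; omega
  have hstrings := Mtk.two_pow_le_two_mul_card_toLeft hS (by omega)
  have hcard := S.card_toLeft_le
  omega

theorem stmt19 (t k : ℕ) (hk : 2 ≤ k) (ht : k + 3 < t) :
    2 ^ (t - 1) ≤ kMetricDim (Mtk t k) (k + 1) :=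
  stmt19_general t k ht
end
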